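/- Shallow net representation by eDCNN: let 2 ≤ s ≤ d, n ∈ ℕ, L* = ⌈nd/(s-1)⌉, W ∈ ℝ^{n×d}, θ ∈ ℝ^n. Then there exist scalars b¹,…,b^{L*-1} ∈ ℝ, a vector b^{L*} ∈ ℝ^{d+L*s}, and filters w¹,…,w^{L*} supported on {0,…,s} such that for all x ∈ [0,1]^d, σ(Wx+θ) = S_{d+L*s, d, 0} ∘ σ ∘ C_{L*} ∘ σ ∘ C^R_{L*-1} ∘ ⋯ ∘ σ ∘ C^R_1 (x), where C^R_k(v) = w^k * v + b^k 𝟙 and C_{L*}(v) = w^{L*} * v + b^{L*}. -/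

import Mathlib

/-- A sequence `w : ℤ → ℝ` is supported on `{0,…,s}`. -/
def SuppOn (s : ℕ) (w : ℤ → ℝ) : Prop :=
  ∀ j : ℤ, (j < 0 ∨ (s : ℤ) < j) → w j = 0

/-- Zero-padded (full) convolution of sequences. -/
noncomputable def convSeq (w v : ℤ → ℝ) : ℤ → ℝ :=
  fun j => ∑ᶠ k : ℤ, w (j - k) * v k

/-- The indicator of coordinates `{1,…,m}`. -/
def onesV (m : ℕ) : ℤ → ℝ := fun j => if 1 ≤ j ∧ j ≤ (m : ℤ) then 1 else 0

/-- Restricted eDCNN layers with ReLU: `σ(w^k * (previous) + b^k 𝟙_{d+ks})`. -/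
noncomputable def eDCNNRelu (s d : ℕ) (w : ℕ → ℤ → ℝ) (b : ℕ → ℝ) (x : ℤ → ℝ) :
    ℕ → ℤ → ℝ
  | 0 => x
  | k + 1 => fun j =>
      max (convSeq (w k) (eDCNNRelu s d w b x k) j + onesV (d + (k + 1) * s) j * b k) 0

/-- Embedding of `ℝ^d` into `ℝ^ℤ` at coordinates `1,…,d`. -/
def embed (d : ℕ) (x : Fin d → ℝ) : ℤ → ℝ :=
  fun j => if h : 1 ≤ j ∧ j ≤ (d : ℤ) then x ⟨(j - 1).toNat, by omega⟩ else 0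

/-!
Filters supported on `{0, …, s}` are coefficient sequences of real polynomials of degree `≤ s`,
and composing convolutions multiplies the polynomials. The rows of `W`, each reversed and laid
end to end, form a polynomial of degree `< n d` whose convolution with the embedded input carries
`(W x)_i` at position `(i + 1) d`. Real irreducible polynomials have degree `≤ 2`, so this
polynomial splits into `L*` factors of degree `≤ s`: these are the filters. For inputs in
`[0,1]^d` every layer is bounded, so constant biases that are large enough keep all hidden
pre-activations nonnegative; the hidden ReLUs then act as the identity and the network computes
the product filter applied to `x` plus an offset independent of `x`, which the last bias vector
replaces by `θ`.
-/

open Polynomial Finset Function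

section Convolution

variable {s : ℕ} {w : ℤ → ℝ}

theorem convSeq_eq_sum_range (hw : SuppOn s w) (v : ℤ → ℝ) (j : ℤ) :
    convSeq w v j = ∑ t ∈ range (s + 1), w t * v (j - t) := by
  have hsupp : support (fun t : ℤ ↦ w t * v (j - t)) ⊆
      ((range (s + 1)).map Nat.castEmbedding : Finset ℤ) := by
    intro t ht
    have ht0 : w t ≠ 0 := left_ne_zero_of_mul ht
    have : 0 ≤ t ∧ t ≤ s := by
      by_contra h
      exact ht0 (hw t (by omega))
    simp only [coe_map, Set.mem_image, coe_range, Set.mem_Iio, Nat.castEmbedding_apply]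
    exact ⟨t.toNat, by omega, by omega⟩
  rw [convSeq, ← finsum_comp_equiv (Equiv.subLeft j)]
  simp only [Equiv.subLeft_apply, sub_sub_cancel]
  rw [finsum_eq_finsetSum_of_support_subset _ hsupp, sum_map]
  rfl

theorem convSeq_add (hw : SuppOn s w) (u v : ℤ → ℝ) :
    convSeq w (u + v) = convSeq w u + convSeq w v := by
  ext j
  simp only [convSeq_eq_sum_range hw, Pi.add_apply, mul_add, sum_add_distrib]

theorem abs_convSeq_le (hw : SuppOn s w) {v : ℤ → ℝ} {M : ℝ} (hv : ∀ j, |v j| ≤ M) (j : ℤ) :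
    |convSeq w v j| ≤ (∑ t ∈ range (s + 1), |w t|) * M := by
  rw [convSeq_eq_sum_range hw, sum_mul]
  refine (abs_sum_le_sum_abs _ _).trans (sum_le_sum fun t _ ↦ ?_)
  rw [abs_mul]
  exact mul_le_mul_of_nonneg_left (hv _) (abs_nonneg _)

theorem support_convSeq_subset (hw : SuppOn s w) {v : ℤ → ℝ} {a b : ℤ}
    (hv : support v ⊆ Set.Icc a b) : support (convSeq w v) ⊆ Set.Icc a (b + s) := by
  intro j hj
  rw [mem_support, convSeq_eq_sum_range hw] at hj
  obtain ⟨t, ht, hne⟩ := exists_ne_zero_of_sum_ne_zero hj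
  have := hv (right_ne_zero_of_mul hne)
  simp only [mem_range, Set.mem_Icc] at ht this ⊢
  omega

end Convolution

def polySeq (p : ℝ[X]) : ℤ → ℝ
  | (n : ℕ) => p.coeff n
  | .negSucc _ => 0

@[simp]
theorem polySeq_natCast (p : ℝ[X]) (n : ℕ) : polySeq p n = p.coeff n := rfl

theorem suppOn_polySeq {p : ℝ[X]} {s : ℕ} (hp : p.natDegree ≤ s) : SuppOn s (polySeq p) := by
  rintro (n | n) hn
  · rw [Int.ofNat_eq_natCast] at hn
    exact coeff_eq_zero_of_natDegree_lt (by omega)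
  · rfl

theorem convSeq_polySeq_add (p q : ℝ[X]) (v : ℤ → ℝ) :
    convSeq (polySeq (p + q)) v = convSeq (polySeq p) v + convSeq (polySeq q) v := by
  set N := (p + q).natDegree ⊔ p.natDegree ⊔ q.natDegree
  have hsupp {r : ℝ[X]} (hr : r.natDegree ≤ N) := convSeq_eq_sum_range (suppOn_polySeq hr) v
  ext j
  rw [Pi.add_apply, hsupp (by simp [N]), hsupp (by simp [N]), hsupp (by simp [N])]
  simp only [polySeq_natCast, coeff_add, add_mul, sum_add_distrib]

theorem convSeq_polySeq_monomial (n : ℕ) (a : ℝ) (v : ℤ → ℝ) (j : ℤ) :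
    convSeq (polySeq (monomial n a)) v j = a * v (j - n) := by
  rw [convSeq_eq_sum_range (suppOn_polySeq (natDegree_monomial_le _)),
    sum_eq_single_of_mem n (self_mem_range_succ n) fun t _ ht ↦ by simp [coeff_monomial, ht.symm]]
  simp

theorem convSeq_polySeq_one (v : ℤ → ℝ) : convSeq (polySeq 1) v = v := by
  ext j
  simpa using convSeq_polySeq_monomial 0 1 v j

theorem convSeq_polySeq_mul (p q : ℝ[X]) (v : ℤ → ℝ) :
    convSeq (polySeq (p * q)) v = convSeq (polySeq p) (convSeq (polySeq q) v) := by
  induction p using Polynomial.induction_on' with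
  | add p₁ p₂ h₁ h₂ => rw [add_mul, convSeq_polySeq_add, h₁, h₂, convSeq_polySeq_add]
  | monomial n a =>
    induction q using Polynomial.induction_on' with
    | add q₁ q₂ h₁ h₂ =>
      rw [mul_add, convSeq_polySeq_add, h₁, h₂, convSeq_polySeq_add,
        convSeq_add (suppOn_polySeq (natDegree_monomial_le _))]
    | monomial m b =>
      ext j
      simp only [monomial_mul_monomial, convSeq_polySeq_monomial, Nat.cast_add, sub_sub, mul_assoc]

namespace Polynomial

theorem exists_eq_mul_natDegree_between {P : ℝ[X]} (hP : P ≠ 0) {t : ℕ} (ht : t ≤ P.natDegree) :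
    ∃ u r : ℝ[X], P = u * r ∧ t ≤ u.natDegree ∧ u.natDegree ≤ t + 1 := by
  induction t with
  | zero => exact ⟨1, P, (one_mul P).symm, by simp⟩
  | succ t ih =>
    obtain ⟨u, r, rfl, hu⟩ := ih (by omega)
    by_cases hut : t + 1 ≤ u.natDegree
    · exact ⟨u, r, rfl, hut, by omega⟩
    have hu0 : u ≠ 0 := left_ne_zero_of_mul hP
    have hr0 : r ≠ 0 := right_ne_zero_of_mul hP
    rw [natDegree_mul hu0 hr0] at ht
    have hr : ¬IsUnit r := fun h ↦ by
      have := natDegree_eq_zero_of_isUnit h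
      omega
    obtain ⟨m, hm, r', rfl⟩ := WfDvdMonoid.exists_irreducible_factor hr hr0
    refine ⟨u * m, r', by ring, ?_⟩
    have := hm.natDegree_pos
    have := hm.natDegree_le_two
    rw [natDegree_mul hu0 hm.ne_zero]
    omega

theorem exists_prod_range_eq_of_natDegree_le {s : ℕ} (hs : 2 ≤ s) (K : ℕ) {P : ℝ[X]}
    (hP : P.natDegree ≤ K * (s - 1) + s) :
    ∃ q : ℕ → ℝ[X], (∀ k, (q k).natDegree ≤ s) ∧ ∏ k ∈ range (K + 1), q k = P := by
  have single {P : ℝ[X]} (hP : P.natDegree ≤ s) (K : ℕ) :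
      ∃ q : ℕ → ℝ[X], (∀ k, (q k).natDegree ≤ s) ∧ ∏ k ∈ range (K + 1), q k = P :=
    ⟨fun k ↦ if k = 0 then P else 1, fun k ↦ by dsimp only; split_ifs <;> simp [hP], by simp⟩
  induction K generalizing P with
  | zero => exact single (by simpa using hP) 0
  | succ K ih =>
    by_cases hPs : P.natDegree ≤ s
    · exact single hPs (K + 1)
    have hP0 : P ≠ 0 := by rintro rfl; simp at hPs
    obtain ⟨u, r, rfl, hu⟩ := exists_eq_mul_natDegree_between hP0 (t := s - 1) (by omega)
    rw [natDegree_mul (left_ne_zero_of_mul hP0) (right_ne_zero_of_mul hP0)] at hP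
    obtain ⟨q, hq, rfl⟩ := ih (P := r) (by rw [add_one_mul] at hP; omega)
    refine ⟨fun k ↦ if k = 0 then u else q (k - 1), fun k ↦ ?_, ?_⟩
    · dsimp only
      split_ifs
      · omega
      · exact hq _
    · rw [prod_range_succ', mul_comm]
      simp

end Polynomial

noncomputable def convChain (w : ℕ → ℤ → ℝ) (v : ℤ → ℝ) : ℕ → ℤ → ℝ
  | 0 => v
  | k + 1 => convSeq (w k) (convChain w v k)

theorem convChain_succ (w : ℕ → ℤ → ℝ) (v : ℤ → ℝ) (k : ℕ) :
    convChain w v (k + 1) = convSeq (w k) (convChain w v k) := rfl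

theorem convChain_polySeq (q : ℕ → ℝ[X]) (v : ℤ → ℝ) (k : ℕ) :
    convChain (fun k ↦ polySeq (q k)) v k = convSeq (polySeq (∏ t ∈ range k, q t)) v := by
  induction k with
  | zero => exact (convSeq_polySeq_one v).symm
  | succ k ih => rw [convChain_succ, ih, prod_range_succ, mul_comm, convSeq_polySeq_mul]

section Straightening

variable {s d : ℕ} {w : ℕ → ℤ → ℝ}

theorem abs_convChain_le (hw : ∀ k, SuppOn s (w k)) {v : ℤ → ℝ} {M : ℝ} (hv : ∀ j, |v j| ≤ M)
    (k : ℕ) (j : ℤ) :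
    |convChain w v k j| ≤ (∏ t ∈ range k, ∑ i ∈ range (s + 1), |w t i|) * M := by
  induction k generalizing j with
  | zero => simpa [convChain] using hv j
  | succ k ih =>
    rw [prod_range_succ, mul_comm _ (∑ i ∈ range (s + 1), _), mul_assoc]
    exact abs_convSeq_le (hw k) ih j

theorem support_convChain_subset (hw : ∀ k, SuppOn s (w k)) {v : ℤ → ℝ}
    (hv : support v ⊆ Set.Icc 1 d) (k : ℕ) :
    support (convChain w v k) ⊆ Set.Icc 1 ((d + k * s : ℕ) : ℤ) := by
  induction k with
  | zero => simpa [convChain] using hv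
  | succ k ih =>
    refine (support_convSeq_subset (hw k) ih).trans (Set.Icc_subset_Icc le_rfl ?_)
    push_cast
    linarith

def offsetBound (a B : ℕ → ℝ) : ℕ → ℝ
  | 0 => 0
  | k + 1 => a k * offsetBound a B k + |B (k + 1) + a k * offsetBound a B k|

theorem exists_bias_eDCNNRelu_eq_convChain_add (hw : ∀ k, SuppOn s (w k)) {S : Set (ℤ → ℝ)}
    {M : ℝ} (hsupp : ∀ v ∈ S, support v ⊆ Set.Icc 1 d) (hbdd : ∀ v ∈ S, ∀ j, |v j| ≤ M) :
    ∃ (b : ℕ → ℝ) (c : ℕ → ℤ → ℝ),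
      ∀ v ∈ S, ∀ k, eDCNNRelu s d w b v k = convChain w v k + c k := by
  set a : ℕ → ℝ := fun k ↦ ∑ i ∈ range (s + 1), |w k i|
  set B : ℕ → ℝ := fun k ↦ (∏ t ∈ range k, a t) * M
  -- `B k` bounds `convChain w v k` and `offsetBound a B k` bounds `c k`, so the bias `b k` makes
  -- every pre-activation of layer `k + 1` nonnegative on its window `[1, d + (k + 1) s]`.
  set b : ℕ → ℝ := fun k ↦ B (k + 1) + a k * offsetBound a B k
  set c : ℕ → ℤ → ℝ := eDCNNRelu s d w b 0
  have hc : ∀ k j, |c k j| ≤ offsetBound a B k := by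
    intro k
    induction k with
    | zero => simp [c, eDCNNRelu, offsetBound]
    | succ k ih =>
      intro j
      have hconv := abs_convSeq_le (hw k) ih j
      have hones : |onesV (d + (k + 1) * s) j| ≤ 1 := by unfold onesV; split_ifs <;> simp
      calc |c (k + 1) j|
          ≤ |convSeq (w k) (c k) j + onesV (d + (k + 1) * s) j * b k| := by
            rw [abs_of_nonneg (le_max_right _ _)]
            exact max_le (le_abs_self _) (abs_nonneg _)
        _ ≤ a k * offsetBound a B k + |b k| := by
            refine (abs_add_le _ _).trans (add_le_add hconv ?_)
            rw [abs_mul]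
            exact mul_le_of_le_one_left (abs_nonneg _) hones
  refine ⟨b, c, fun v hv k ↦ ?_⟩
  induction k with
  | zero => simp [c, eDCNNRelu, convChain]
  | succ k ih =>
    ext j
    simp only [eDCNNRelu, ih, convSeq_add (hw k), Pi.add_apply, c, ← convChain_succ]
    have hlin := abs_le.mp (abs_convChain_le hw (hbdd v hv) (k + 1) j)
    have hconv := abs_le.mp (abs_convSeq_le (hw k) (hc k) j)
    by_cases hj : 1 ≤ j ∧ j ≤ ((d + (k + 1) * s : ℕ) : ℤ)
    · rw [onesV, if_pos hj, one_mul, max_eq_left, max_eq_left] <;> linarith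
    · have hzero : convChain w v (k + 1) j = 0 :=
        notMem_support.mp fun h ↦ hj (support_convChain_subset hw (hsupp v hv) (k + 1) h)
      rw [hzero, zero_add, zero_add]

end Straightening

section Embedding

variable {d : ℕ} {x : Fin d → ℝ}

theorem support_embed_subset : support (embed d x) ⊆ Set.Icc 1 d := by
  intro j hj
  by_contra h
  exact hj (dif_neg h)

theorem abs_embed_le_one (hx : ∀ i, x i ∈ Set.Icc (0 : ℝ) 1) (j : ℤ) : |embed d x j| ≤ 1 := by
  unfold embed
  split_ifs with h
  · obtain ⟨h0, h1⟩ := hx ⟨(j - 1).toNat, by omega⟩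
    exact abs_le.mpr ⟨by linarith, h1⟩
  · simp

theorem convSeq_embed (w : ℤ → ℝ) (x : Fin d → ℝ) (j : ℤ) :
    convSeq w (embed d x) j = ∑ t : Fin d, w (j - (t + 1)) * x t := by
  set e : Fin d → ℤ := fun t ↦ t + 1
  have he : Injective e := fun t t' h ↦ by simpa [e, Fin.val_inj] using h
  have hsupp : support (fun k ↦ w (j - k) * embed d x k) ⊆ ↑(univ.image e) := by
    intro k hk
    have := support_embed_subset (right_ne_zero_of_mul hk)
    simp only [Set.mem_Icc] at this
    simp only [coe_image, coe_univ, Set.image_univ, Set.mem_range]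
    exact ⟨⟨(k - 1).toNat, by omega⟩, by simp only [e]; omega⟩
  rw [convSeq, finsum_eq_finsetSum_of_support_subset _ hsupp, sum_image he.injOn]
  refine sum_congr rfl fun t _ ↦ ?_
  have ht : (1 : ℤ) ≤ t + 1 ∧ (t : ℤ) + 1 ≤ d := by omega
  simp [e, embed, ht]

end Embedding

section TargetPolynomial

variable {n d : ℕ}

-- `finProdFinEquiv (i, t.rev) = i d + (d - 1 - t)`: row `i` of `W`, reversed, fills the
-- coefficients `i d, …, (i + 1) d - 1`.
noncomputable def rowPolynomial (W : Matrix (Fin n) (Fin d) ℝ) : ℝ[X] :=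
  ∑ p : Fin n × Fin d, monomial (finProdFinEquiv (p.1, p.2.rev)) (W p.1 p.2)

theorem coeff_rowPolynomial (W : Matrix (Fin n) (Fin d) ℝ) (i : Fin n) (t : Fin d) :
    (rowPolynomial W).coeff (finProdFinEquiv (i, t.rev)) = W i t := by
  have hinj : Injective fun p : Fin n × Fin d ↦ (finProdFinEquiv (p.1, p.2.rev) : ℕ) :=
    Fin.val_injective.comp <| finProdFinEquiv.injective.comp <|
      injective_id.prodMap Fin.rev_injective
  rw [rowPolynomial, finsetSum_coeff, sum_eq_single (i, t)]
  · simp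
  · intro p _ hp
    exact coeff_monomial_of_ne _ (hinj.ne hp).symm
  · simp

theorem natDegree_rowPolynomial_le (W : Matrix (Fin n) (Fin d) ℝ) :
    (rowPolynomial W).natDegree ≤ n * d - 1 :=
  natDegree_sum_le_of_forall_le _ _ fun _ _ ↦
    (natDegree_monomial_le _).trans (Nat.le_sub_one_of_lt (finProdFinEquiv _).isLt)

theorem convSeq_rowPolynomial_embed (W : Matrix (Fin n) (Fin d) ℝ) (x : Fin d → ℝ) (i : Fin n) :
    convSeq (polySeq (rowPolynomial W)) (embed d x) (((i + 1) * d : ℕ) : ℤ) = W.mulVec x i := by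
  rw [convSeq_embed, Matrix.mulVec, dotProduct]
  refine sum_congr rfl fun t _ ↦ ?_
  have hpos : (((i + 1) * d : ℕ) : ℤ) - (t + 1) = (finProdFinEquiv (i, t.rev) : ℕ) := by
    simp only [finProdFinEquiv_apply_val, Fin.val_rev]
    have := t.isLt
    push_cast [Nat.cast_sub this]
    ring
  rw [hpos, polySeq_natCast, coeff_rowPolynomial]

end TargetPolynomial

-- `(a + b - 1) / b` is `⌈a / b⌉`.
theorem Nat.le_pred_div_mul_add (a : ℕ) {b : ℕ} (hb : 0 < b) :
    a ≤ ((a + b - 1) / b - 1) * b + b := by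
  have h := Nat.lt_mul_div_succ (a + b - 1) hb
  rcases hL : (a + b - 1) / b with _ | L
  · rw [hL] at h
    omega
  · rw [hL, mul_comm, add_one_mul] at h
    rw [Nat.add_sub_cancel, ← add_one_mul]
    omega

theorem shallow_net_representation_general (s d n : ℕ) (hs : 2 ≤ s) (hsd : s ≤ d)
    (W : Matrix (Fin n) (Fin d) ℝ) (θ : Fin n → ℝ) :
    ∃ (ws : ℕ → ℤ → ℝ) (b : ℕ → ℝ) (bL : ℤ → ℝ),
      (∀ k, SuppOn s (ws k)) ∧
      ∀ x : Fin d → ℝ, (∀ i, x i ∈ Set.Icc (0 : ℝ) 1) →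
        ∀ i : Fin n,
          max (W.mulVec x i + θ i) 0 =
            max (convSeq (ws ((n * d + s - 2) / (s - 1) - 1))
                  (eDCNNRelu s d ws b (embed d x) ((n * d + s - 2) / (s - 1) - 1))
                  ((((i : ℕ) + 1) * d : ℕ)) +
                bL ((((i : ℕ) + 1) * d : ℕ))) 0 := by
  set K := (n * d + s - 2) / (s - 1) - 1
  have hdeg : (rowPolynomial W).natDegree ≤ K * (s - 1) + s := by
    have hK : n * d ≤ K * (s - 1) + (s - 1) := by
      have := Nat.le_pred_div_mul_add (n * d) (show 0 < s - 1 by omega)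
      rwa [show n * d + (s - 1) - 1 = n * d + s - 2 by omega] at this
    have := natDegree_rowPolynomial_le W
    omega
  obtain ⟨q, hq, hprod⟩ := exists_prod_range_eq_of_natDegree_le hs K hdeg
  set ws : ℕ → ℤ → ℝ := fun k ↦ polySeq (q k)
  have hws (k : ℕ) : SuppOn s (ws k) := suppOn_polySeq (hq k)
  obtain ⟨b, c, hbc⟩ := exists_bias_eDCNNRelu_eq_convChain_add hws (M := 1)
    (S := embed d '' {x | ∀ i, x i ∈ Set.Icc 0 1})
    (by rintro _ ⟨x, -, rfl⟩; exact support_embed_subset)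
    (by rintro _ ⟨x, hx, rfl⟩; exact abs_embed_le_one hx)
  have hpool : Injective fun i : Fin n ↦ (((i + 1) * d : ℕ) : ℤ) := fun i i' h ↦ by
    simpa [Fin.val_inj, show d ≠ 0 by omega] using h
  refine ⟨ws, b, extend (fun i : Fin n ↦ (((i + 1) * d : ℕ) : ℤ)) θ 0 - convSeq (ws K) (c K),
    hws, fun x hx i ↦ ?_⟩
  rw [hbc _ ⟨x, hx, rfl⟩, convSeq_add (hws K), ← convChain_succ, convChain_polySeq, hprod,
    Pi.sub_apply, Pi.add_apply, hpool.extend_apply, convSeq_rowPolynomial_embed,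
    add_add_sub_cancel]

/-- Shallow net representation by eDCNN (Theorem 1 of the paper): for
`2 ≤ s ≤ d`, `W ∈ ℝ^{n×d}`, `θ ∈ ℝ^n` and `L* = ⌈nd/(s-1)⌉`, there exist
constant biases `b¹,…,b^{L*-1}`, a final bias vector `b^{L*}` and filters
`w¹,…,w^{L*}` supported on `{0,…,s}` such that for every `x ∈ [0,1]^d`,
`σ(Wx+θ) = S_{d+L*s,d,0} ∘ σ ∘ C_{L*} ∘ σ ∘ C^R_{L*-1} ∘ ⋯ ∘ σ ∘ C^R_1(x)`,
componentwise (the `i`-th output is the pooled coordinate `i·d`). -/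
theorem shallow_net_representation (s d n : ℕ) (hs : 2 ≤ s) (hsd : s ≤ d)
    (hn : 1 ≤ n) (W : Matrix (Fin n) (Fin d) ℝ) (θ : Fin n → ℝ) :
    ∃ (ws : ℕ → ℤ → ℝ) (b : ℕ → ℝ) (bL : ℤ → ℝ),
      (∀ k, SuppOn s (ws k)) ∧
      ∀ x : Fin d → ℝ, (∀ i, x i ∈ Set.Icc (0 : ℝ) 1) →
        ∀ i : Fin n,
          max (W.mulVec x i + θ i) 0 =
            max (convSeq (ws ((n * d + s - 2) / (s - 1) - 1))
                  (eDCNNRelu s d ws b (embed d x) ((n * d + s - 2) / (s - 1) - 1))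
                  ((((i : ℕ) + 1) * d : ℕ)) +
                bL ((((i : ℕ) + 1) * d : ℕ))) 0 :=
  shallow_net_representation_general s d n hs hsd W θ
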